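/- arXiv:1303.3513 — 2 statements merged into one kernel-verified Lean document; each statement's English description precedes it below -/
import Mathlib

section
/- Let 1 ≤ p < ∞ with p ≠ 2, and let r ≥ n. A matrix τ ∈ M_{r,n}(ℂ), viewed as a linear map ℓ_p^n → ℓ_p^r, is an isometry if and only if the columns of τ have mutually disjoint supports and each column has ℓ_p norm equal to 1. -/
open Finset

/-- The ℓ_q norm of a finite complex sequence. -/
noncomputable def lpNorm (q : ℝ) {m : ℕ} (x : Fin m → ℂ) : ℝ :=
  (∑ i, ‖x i‖ ^ q) ^ (1 / q)

/-!
Testing an isometry on `e_j` gives unit columns, and testing it on `e_j ± e_k` gives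
`∑ᵢ (|τᵢⱼ + τᵢₖ|^p + |τᵢⱼ - τᵢₖ|^p) = 2 ∑ᵢ (|τᵢⱼ|^p + |τᵢₖ|^p)`. Pointwise, Clarkson's inequality
`|a + b|^p + |a - b|^p ≤ 2 (|a|^p + |b|^p)` (reversed for `p > 2`) follows from the parallelogram law,
concavity (convexity) of `t ↦ t^(p/2)` and its subadditivity (superadditivity), and the last step is
strict when `a, b ≠ 0`; so equality of the sums forces `τᵢⱼ τᵢₖ = 0`. Conversely, when the columns have
disjoint supports each coordinate of `τ x` is a single term `τᵢⱼ xⱼ`, so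
`‖τ x‖_p^p = ∑ⱼ ‖τⱼ‖_p^p |xⱼ|^p`.
-/

theorem Real.rpow_add_lt_rpow_add_rpow {s t q : ℝ} (hs : 0 < s) (ht : 0 < t) (hq : q < 1) :
    (s + t) ^ q < s ^ q + t ^ q := by
  have hpart : ∀ {x}, 0 < x → x < s + t → x * (s + t) ^ (q - 1) < x ^ q := fun {x} hx hlt =>
    calc x * (s + t) ^ (q - 1) < x * x ^ (q - 1) :=
          mul_lt_mul_of_pos_left (Real.rpow_lt_rpow_of_neg hx hlt (by linarith)) hx
      _ = x ^ q := by rw [Real.rpow_sub_one hx.ne', mul_div_cancel₀ _ hx.ne']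
  calc (s + t) ^ q = s * (s + t) ^ (q - 1) + t * (s + t) ^ (q - 1) := by
        rw [← add_mul, Real.rpow_sub_one (by positivity), mul_div_cancel₀ _ (by positivity)]
    _ < s ^ q + t ^ q := add_lt_add (hpart hs (by linarith)) (hpart ht (by linarith))

theorem Real.rpow_add_rpow_lt_rpow_add {s t q : ℝ} (hs : 0 < s) (ht : 0 < t) (hq : 1 < q) :
    s ^ q + t ^ q < (s + t) ^ q := by
  have hpart : ∀ {x}, 0 < x → x < s + t → x ^ q < x * (s + t) ^ (q - 1) := fun {x} hx hlt =>
    calc x ^ q = x * x ^ (q - 1) := by rw [Real.rpow_sub_one hx.ne', mul_div_cancel₀ _ hx.ne']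
      _ < x * (s + t) ^ (q - 1) :=
          mul_lt_mul_of_pos_left (Real.rpow_lt_rpow hx.le hlt (by linarith)) hx
  calc s ^ q + t ^ q < s * (s + t) ^ (q - 1) + t * (s + t) ^ (q - 1) :=
        add_lt_add (hpart hs (by linarith)) (hpart ht (by linarith))
    _ = (s + t) ^ q := by
        rw [← add_mul, Real.rpow_sub_one (by positivity), mul_div_cancel₀ _ (by positivity)]

section Clarkson

variable {E : Type*} [NormedAddCommGroup E]

noncomputable def clarksonGap (p : ℝ) (a b : E) : ℝ :=
  ‖a + b‖ ^ p + ‖a - b‖ ^ p - 2 * (‖a‖ ^ p + ‖b‖ ^ p)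

theorem clarksonGap_eq_zero {p : ℝ} (hp : p ≠ 0) {a b : E} (h : a = 0 ∨ b = 0) :
    clarksonGap p a b = 0 := by
  rcases h with rfl | rfl <;> simp [clarksonGap, Real.zero_rpow hp] <;> ring

variable [InnerProductSpace ℝ E]

theorem mul_clarksonGap_pos {p : ℝ} (hp : 0 < p) (hp2 : p ≠ 2) {a b : E} (ha : a ≠ 0)
    (hb : b ≠ 0) : 0 < (p - 2) * clarksonGap p a b := by
  set q := p / 2 with hq
  have hsq : ∀ x : E, ‖x‖ ^ p = (‖x‖ ^ 2) ^ q := fun x => by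
    rw [← Real.rpow_natCast_mul (norm_nonneg x), hq, Nat.cast_ofNat,
      mul_div_cancel₀ p two_ne_zero]
  have hmid : 1 / 2 * ‖a + b‖ ^ 2 + 1 / 2 * ‖a - b‖ ^ 2 = ‖a‖ ^ 2 + ‖b‖ ^ 2 := by
    linarith [parallelogram_law_with_norm ℝ a b]
  have hs : 0 < ‖a‖ ^ 2 := by positivity
  have ht : 0 < ‖b‖ ^ 2 := by positivity
  have hu : ‖a + b‖ ^ 2 ∈ Set.Ici (0 : ℝ) := Set.mem_Ici.2 (sq_nonneg _)
  have hv : ‖a - b‖ ^ 2 ∈ Set.Ici (0 : ℝ) := Set.mem_Ici.2 (sq_nonneg _)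
  simp only [clarksonGap, hsq]
  rcases hp2.lt_or_gt with hlt | hgt
  · have hmean := (Real.concaveOn_rpow (p := q) (by positivity) (by linarith)).2 hu hv
      (by norm_num) (by norm_num) (add_halves (1 : ℝ))
    have hsub := Real.rpow_add_lt_rpow_add_rpow hs ht (show q < 1 by linarith)
    simp only [smul_eq_mul, hmid] at hmean
    exact mul_pos_of_neg_of_neg (by linarith) (by linarith)
  · have hmean := (convexOn_rpow (p := q) (by linarith)).2 hu hv
      (by norm_num) (by norm_num) (add_halves (1 : ℝ))
    have hsuper := Real.rpow_add_rpow_lt_rpow_add hs ht (show 1 < q by linarith)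
    simp only [smul_eq_mul, hmid] at hmean
    exact mul_pos (by linarith) (by linarith)

theorem mul_clarksonGap_nonneg {p : ℝ} (hp : 0 < p) (hp2 : p ≠ 2) (a b : E) :
    0 ≤ (p - 2) * clarksonGap p a b := by
  by_cases h : a = 0 ∨ b = 0
  · rw [clarksonGap_eq_zero hp.ne' h, mul_zero]
  · push Not at h
    exact (mul_clarksonGap_pos hp hp2 h.1 h.2).le

theorem eq_zero_or_eq_zero_of_sum_clarkson_eq {ι : Type*} [Fintype ι] {p : ℝ} (hp : 0 < p)
    (hp2 : p ≠ 2) {u v : ι → E}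
    (h : ∑ i, ‖u i + v i‖ ^ p + ∑ i, ‖u i - v i‖ ^ p = 2 * (∑ i, ‖u i‖ ^ p + ∑ i, ‖v i‖ ^ p))
    (i : ι) : u i = 0 ∨ v i = 0 := by
  by_contra! hi
  have hsum : ∑ i, (p - 2) * clarksonGap p (u i) (v i) = 0 := by
    simp only [clarksonGap, ← mul_sum, sum_sub_distrib, sum_add_distrib, h, sub_self, mul_zero]
  refine (sum_pos' (fun i _ => mul_clarksonGap_nonneg hp hp2 _ _) ?_).ne' hsum
  exact ⟨i, mem_univ i, mul_clarksonGap_pos hp hp2 hi.1 hi.2⟩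

end Clarkson

theorem lpNorm_eq_lpNorm_iff {p : ℝ} (hp : 0 < p) {m m' : ℕ} (x : Fin m → ℂ) (y : Fin m' → ℂ) :
    lpNorm p x = lpNorm p y ↔ ∑ i, ‖x i‖ ^ p = ∑ i, ‖y i‖ ^ p :=
  Real.rpow_left_inj (sum_nonneg fun _ _ => by positivity) (sum_nonneg fun _ _ => by positivity)
    (one_div_ne_zero hp.ne')

theorem lpNorm_eq_one_iff {p : ℝ} (hp : 0 < p) {m : ℕ} (x : Fin m → ℂ) :
    lpNorm p x = 1 ↔ ∑ i, ‖x i‖ ^ p = 1 := by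
  have h := Real.rpow_left_inj (sum_nonneg fun i _ => by positivity : 0 ≤ ∑ i, ‖x i‖ ^ p)
    zero_le_one (one_div_ne_zero hp.ne')
  rwa [Real.one_rpow] at h

section Single

variable {ι E : Type*} [Fintype ι] [DecidableEq ι] [NormedAddCommGroup E] {p : ℝ}

theorem sum_norm_single_rpow (hp : p ≠ 0) (j : ι) (a : E) :
    ∑ l, ‖(Pi.single j a : ι → E) l‖ ^ p = ‖a‖ ^ p := by
  rw [Fintype.sum_eq_single j fun l hl => by simp [hl, Real.zero_rpow hp], Pi.single_eq_same]

theorem sum_norm_single_add_single_rpow (hp : p ≠ 0) {j k : ι} (hjk : j ≠ k) (a b : E) :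
    ∑ l, ‖(Pi.single j a + Pi.single k b : ι → E) l‖ ^ p = ‖a‖ ^ p + ‖b‖ ^ p := by
  rw [Fintype.sum_eq_add j k hjk fun l hl => by simp [hl.1, hl.2, Real.zero_rpow hp]]
  simp [hjk, hjk.symm]

end Single

section DisjointColumns

variable {ι κ 𝕜 : Type*} [Fintype κ] [NormedDivisionRing 𝕜] {p : ℝ}

theorem norm_sum_mul_rpow_of_disjoint (hp : p ≠ 0) {w : κ → 𝕜}
    (hw : ∀ j k, j ≠ k → w j = 0 ∨ w k = 0) (x : κ → 𝕜) :
    ‖∑ j, w j * x j‖ ^ p = ∑ j, ‖w j‖ ^ p * ‖x j‖ ^ p := by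
  by_cases h : ∀ j, w j = 0
  · simp [h, Real.zero_rpow hp]
  push Not at h
  obtain ⟨j₀, hj₀⟩ := h
  have hz : ∀ j ≠ j₀, w j = 0 := fun j hj => (hw j j₀ hj).resolve_right hj₀
  rw [Fintype.sum_eq_single j₀ fun j hj => by simp [hz j hj],
    Fintype.sum_eq_single j₀ fun j hj => by simp [hz j hj, Real.zero_rpow hp], norm_mul,
    Real.mul_rpow (norm_nonneg _) (norm_nonneg _)]

theorem sum_norm_mulVec_rpow_of_disjoint_columns [Fintype ι] (hp : p ≠ 0)
    {τ : Matrix ι κ 𝕜} (hτ : ∀ j k, j ≠ k → ∀ i, τ i j = 0 ∨ τ i k = 0) (x : κ → 𝕜) :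
    ∑ i, ‖τ.mulVec x i‖ ^ p = ∑ j, (∑ i, ‖τ i j‖ ^ p) * ‖x j‖ ^ p := by
  calc ∑ i, ‖τ.mulVec x i‖ ^ p = ∑ i, ∑ j, ‖τ i j‖ ^ p * ‖x j‖ ^ p :=
        sum_congr rfl fun i _ => norm_sum_mul_rpow_of_disjoint hp (fun j k h => hτ j k h i) x
    _ = ∑ j, (∑ i, ‖τ i j‖ ^ p) * ‖x j‖ ^ p := by
        rw [sum_comm]; simp only [sum_mul]

end DisjointColumns

theorem isometry_iff_disjoint_supports_general (p : ℝ) (hp : 1 ≤ p) (hp2 : p ≠ 2)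
    (n r : ℕ) (τ : Matrix (Fin r) (Fin n) ℂ) :
    (∀ x : Fin n → ℂ, lpNorm p (τ.mulVec x) = lpNorm p x) ↔
      ((∀ j k : Fin n, j ≠ k → ∀ i : Fin r, τ i j = 0 ∨ τ i k = 0) ∧
        ∀ j : Fin n, lpNorm p (fun i => τ i j) = 1) := by
  have hp0 : 0 < p := by linarith
  simp only [lpNorm_eq_lpNorm_iff hp0, lpNorm_eq_one_iff hp0]
  constructor
  · intro hiso
    have hcol : ∀ j, ∑ i, ‖τ i j‖ ^ p = 1 := fun j => by
      simpa [Matrix.mulVec_single_one, sum_norm_single_rpow hp0.ne'] using hiso (Pi.single j 1)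
    refine ⟨fun j k hjk => eq_zero_or_eq_zero_of_sum_clarkson_eq hp0 hp2 ?_, hcol⟩
    have hpair : ∀ b : ℂ, ∑ i, ‖τ i j + b * τ i k‖ ^ p = 1 + ‖b‖ ^ p := fun b => by
      have h := hiso (Pi.single j 1 + Pi.single k b)
      rw [sum_norm_single_add_single_rpow hp0.ne' hjk, norm_one, Real.one_rpow] at h
      simpa [Matrix.mulVec_add, Matrix.mulVec_single] using h
    have hadd : ∑ i, ‖τ i j + τ i k‖ ^ p = 1 + 1 := by simpa using hpair 1
    have hsub : ∑ i, ‖τ i j - τ i k‖ ^ p = 1 + 1 := by simpa [← sub_eq_add_neg] using hpair (-1)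
    rw [hadd, hsub, hcol, hcol]
    norm_num
  · rintro ⟨hdisj, hcol⟩ x
    simp [sum_norm_mulVec_rpow_of_disjoint_columns hp0.ne' hdisj, hcol]

/-- Lemma 4.3: for `1 ≤ p < ∞`, `p ≠ 2`, and `r ≥ n`, a matrix `τ ∈ M_{r,n}(ℂ)` is an
isometry `ℓ_p^n → ℓ_p^r` iff its columns have mutually disjoint supports and each
column has ℓ_p norm 1. -/
theorem isometry_iff_disjoint_supports (p : ℝ) (hp : 1 ≤ p) (hp2 : p ≠ 2)
    (n r : ℕ) (hnr : n ≤ r) (τ : Matrix (Fin r) (Fin n) ℂ) :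
    (∀ x : Fin n → ℂ, lpNorm p (τ.mulVec x) = lpNorm p x) ↔
      ((∀ j k : Fin n, j ≠ k → ∀ i : Fin r, τ i j = 0 ∨ τ i k = 0) ∧
        ∀ j : Fin n, lpNorm p (fun i => τ i j) = 1) :=
  isometry_iff_disjoint_supports_general p hp hp2 n r τ
end

section
/- Let V be a p-operator space and n ∈ ℕ. Define ‖v‖_{1,n} = inf{ ‖α‖_{p'} ‖w‖ ‖β‖_p : r ∈ ℕ, v = α w β, α ∈ M_{n,r}(ℂ), β ∈ M_{r,n}(ℂ), w ∈ M_r(V) }, where ‖α‖_{p'} and ‖β‖_p are entrywise norms. Then ‖·‖_{1,n} satisfies the triangle inequality: ‖v_1 + v_2‖_{1,n} ≤ ‖v_1‖_{1,n} + ‖v_2‖_{1,n}. -/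
open Finset Matrix

/-- The operator norm of a matrix viewed as a map `ℓ_q^b → ℓ_q^a`. -/
noncomputable def opNorm (q : ℝ) {a b : ℕ} (A : Matrix (Fin a) (Fin b) ℂ) : ℝ :=
  sSup {c | ∃ x : Fin b → ℂ, lpNorm q x ≤ 1 ∧ c = lpNorm q (A.mulVec x)}

/-- The entrywise ℓ_q norm of a matrix. -/
noncomputable def eNorm (q : ℝ) {a b : ℕ} (A : Matrix (Fin a) (Fin b) ℂ) : ℝ :=
  (∑ i, ∑ j, ‖A i j‖ ^ q) ^ (1 / q)

variable {V : Type*} [NormedAddCommGroup V] [NormedSpace ℂ V]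

/-- The product `α w β` of scalar matrices `α ∈ M_{n,r}(ℂ)`, `β ∈ M_{r,n}(ℂ)` with a
matrix `w ∈ M_r(V)` over a vector space `V`. -/
def act {n r : ℕ} (α : Matrix (Fin n) (Fin r) ℂ) (w : Matrix (Fin r) (Fin r) V)
    (β : Matrix (Fin r) (Fin n) ℂ) : Matrix (Fin n) (Fin n) V :=
  fun i j => ∑ k, ∑ l, (α i k * β l j) • w k l

/-- The block-diagonal direct sum `v₁ ⊕ v₂ ∈ M_{n+m}(V)`. -/
def blockDiag {n m : ℕ} (v₁ : Matrix (Fin n) (Fin n) V) (v₂ : Matrix (Fin m) (Fin m) V) :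
    Matrix (Fin (n + m)) (Fin (n + m)) V :=
  Matrix.reindex finSumFinEquiv finSumFinEquiv (Matrix.fromBlocks v₁ 0 0 v₂)

/-- An (abstract) p-operator space structure on a complex Banach space `V`: a sequence of
norms on the matrix spaces `M_r(V)` satisfying the axioms `D_∞` and `M_p`. -/
structure POpSpace (p : ℝ) (V : Type*) [NormedAddCommGroup V] [NormedSpace ℂ V] where
  /-- the norm on `M_r(V)` -/
  N : ∀ r : ℕ, Matrix (Fin r) (Fin r) V → ℝ
  nonneg : ∀ r w, 0 ≤ N r w
  add_le : ∀ r u w, N r (u + w) ≤ N r u + N r w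
  eq_zero_iff : ∀ r w, N r w = 0 ↔ w = 0
  smul_eq : ∀ r (c : ℂ) w, N r (c • w) = ‖c‖ * N r w
  Dinf : ∀ (n m : ℕ) (v₁ : Matrix (Fin n) (Fin n) V) (v₂ : Matrix (Fin m) (Fin m) V),
    N (n + m) (blockDiag v₁ v₂) = max (N n v₁) (N m v₂)
  Mp : ∀ (n r : ℕ) (α : Matrix (Fin n) (Fin r) ℂ) (w : Matrix (Fin r) (Fin r) V)
    (β : Matrix (Fin r) (Fin n) ℂ), N n (act α w β) ≤ opNorm p α * N r w * opNorm p β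

lemma finSum_split {M : Type*} [AddCommMonoid M] {r₁ r₂ : ℕ} (G : Fin (r₁ + r₂) → M) :
    ∑ k, G k = ∑ k₁ : Fin r₁, G (finSumFinEquiv (Sum.inl k₁)) +
      ∑ k₂ : Fin r₂, G (finSumFinEquiv (Sum.inr k₂)) := by
  rw [← Equiv.sum_comp finSumFinEquiv G, Fintype.sum_sum_type]

lemma act_one {n : ℕ} (v : Matrix (Fin n) (Fin n) V) : act 1 v 1 = v := by
  funext i j
  simp [act, Matrix.one_apply, ite_smul, mul_ite, ite_mul]

lemma sum_norm_rpow_nonneg (q : ℝ) {a b : ℕ} (A : Matrix (Fin a) (Fin b) ℂ) :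
    0 ≤ ∑ i, ∑ j, ‖A i j‖ ^ q := by positivity

lemma eNorm_nonneg (q : ℝ) {a b : ℕ} (A : Matrix (Fin a) (Fin b) ℂ) : 0 ≤ eNorm q A :=
  Real.rpow_nonneg (sum_norm_rpow_nonneg q A) _

lemma eNorm_eq_zero {q : ℝ} (hq : 0 < q) {a b : ℕ} {A : Matrix (Fin a) (Fin b) ℂ}
    (h : eNorm q A = 0) : A = 0 := by
  unfold eNorm at h
  have hs : ∑ i, ∑ j, ‖A i j‖ ^ q = 0 := by
    have := Real.rpow_natCast
    rcases (Real.rpow_eq_zero (sum_norm_rpow_nonneg q A) (by positivity : (1:ℝ)/q ≠ 0)).1 h with h2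
    exact h2
  funext i j
  have h1 : ∀ i ∈ univ, (0:ℝ) ≤ ∑ j, ‖A i j‖ ^ q := fun i _ => by positivity
  have h2 := (Finset.sum_eq_zero_iff_of_nonneg h1).1 hs i (mem_univ i)
  have h3 := (Finset.sum_eq_zero_iff_of_nonneg (fun j _ => by positivity)).1 h2 j (mem_univ j)
  have := (Real.rpow_eq_zero (norm_nonneg _) (ne_of_gt hq)).1 h3
  simpa using this

lemma act_smul₃ {n r : ℕ} (a b c : ℂ) (α : Matrix (Fin n) (Fin r) ℂ)
    (w : Matrix (Fin r) (Fin r) V) (β : Matrix (Fin r) (Fin n) ℂ) :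
    act (a • α) (b • w) (c • β) = (a * b * c) • act α w β := by
  funext i j
  simp only [act, Matrix.smul_apply, smul_smul, Finset.smul_sum, smul_eq_mul]
  refine Finset.sum_congr rfl fun k _ => Finset.sum_congr rfl fun l _ => ?_
  congr 1
  ring

lemma act_zero_left {n r : ℕ} (w : Matrix (Fin r) (Fin r) V) (β : Matrix (Fin r) (Fin n) ℂ) :
    act (0 : Matrix (Fin n) (Fin r) ℂ) w β = 0 := by
  funext i j; simp [act]

lemma act_zero_mid {n r : ℕ} (α : Matrix (Fin n) (Fin r) ℂ) (β : Matrix (Fin r) (Fin n) ℂ) :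
    act α (0 : Matrix (Fin r) (Fin r) V) β = 0 := by
  funext i j; simp [act]

lemma act_zero_right {n r : ℕ} (α : Matrix (Fin n) (Fin r) ℂ) (w : Matrix (Fin r) (Fin r) V) :
    act α w (0 : Matrix (Fin r) (Fin n) ℂ) = 0 := by
  funext i j; simp [act]

lemma act_block {n r₁ r₂ : ℕ} (α₁ : Matrix (Fin n) (Fin r₁) ℂ) (α₂ : Matrix (Fin n) (Fin r₂) ℂ)
    (w₁ : Matrix (Fin r₁) (Fin r₁) V) (w₂ : Matrix (Fin r₂) (Fin r₂) V)
    (β₁ : Matrix (Fin r₁) (Fin n) ℂ) (β₂ : Matrix (Fin r₂) (Fin n) ℂ) :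
    act (Matrix.of fun i k => Sum.elim (α₁ i) (α₂ i) (finSumFinEquiv.symm k))
      (blockDiag w₁ w₂)
      (Matrix.of fun k j => Sum.elim (fun l => β₁ l j) (fun l => β₂ l j) (finSumFinEquiv.symm k))
      = act α₁ w₁ β₁ + act α₂ w₂ β₂ := by
  funext i j
  show (∑ k, ∑ l, _) = act α₁ w₁ β₁ i j + act α₂ w₂ β₂ i j
  rw [finSum_split (fun k => ∑ l, _)]
  simp only [finSum_split (r₁ := r₁) (r₂ := r₂)]
  simp only [Matrix.of_apply, finSumFinEquiv_apply_left, finSumFinEquiv_apply_right,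
    Equiv.symm_apply_apply]
  have h11 : ∀ k l, _root_.blockDiag w₁ w₂ (Fin.castAdd r₂ k) (Fin.castAdd r₂ l) = w₁ k l := by
    intro k l
    simp [_root_.blockDiag, ← finSumFinEquiv_apply_left, Equiv.symm_apply_apply]
  have h12 : ∀ k l, _root_.blockDiag w₁ w₂ (Fin.castAdd r₂ k) (Fin.natAdd r₁ l) = 0 := by
    intro k l
    simp [_root_.blockDiag, ← finSumFinEquiv_apply_left, ← finSumFinEquiv_apply_right,
      Equiv.symm_apply_apply]
  have h21 : ∀ k l, _root_.blockDiag w₁ w₂ (Fin.natAdd r₁ k) (Fin.castAdd r₂ l) = 0 := by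
    intro k l
    simp [_root_.blockDiag, ← finSumFinEquiv_apply_left, ← finSumFinEquiv_apply_right,
      Equiv.symm_apply_apply]
  have h22 : ∀ k l, _root_.blockDiag w₁ w₂ (Fin.natAdd r₁ k) (Fin.natAdd r₁ l) = w₂ k l := by
    intro k l
    simp [_root_.blockDiag, ← finSumFinEquiv_apply_right, Equiv.symm_apply_apply]
  simp [h11, h12, h21, h22, act]

lemma eNorm_rpow {q : ℝ} (hq : 0 < q) {a b : ℕ} (A : Matrix (Fin a) (Fin b) ℂ) :
    eNorm q A ^ q = ∑ i, ∑ j, ‖A i j‖ ^ q := by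
  unfold eNorm
  rw [← Real.rpow_mul (sum_norm_rpow_nonneg q A), one_div_mul_cancel hq.ne', Real.rpow_one]

lemma eNorm_smul {q : ℝ} (hq : 0 < q) {a b : ℕ} (c : ℂ) (A : Matrix (Fin a) (Fin b) ℂ) :
    eNorm q (c • A) = ‖c‖ * eNorm q A := by
  unfold eNorm
  have h : ∀ i j, ‖(c • A) i j‖ ^ q = ‖c‖ ^ q * ‖A i j‖ ^ q := fun i j => by
    rw [Matrix.smul_apply, norm_smul, Real.mul_rpow (norm_nonneg _) (norm_nonneg _)]
  simp only [h, ← Finset.mul_sum]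
  rw [Real.mul_rpow (by positivity) (sum_norm_rpow_nonneg q A),
    ← Real.rpow_mul (norm_nonneg c), mul_one_div_cancel hq.ne', Real.rpow_one]

/-- The key rescaling computation. -/
lemma scaled_sum {q : ℝ} (hq : 0 < q) {a b : ℕ} {A : Matrix (Fin a) (Fin b) ℂ}
    (h0 : eNorm q A ≠ 0) {t : ℝ} (ht : 0 < t) :
    ∑ i, ∑ j, ‖((((t ^ (1/q) / eNorm q A : ℝ)) : ℂ) • A) i j‖ ^ q = t := by
  have hA : 0 < eNorm q A := lt_of_le_of_ne (eNorm_nonneg q A) (Ne.symm h0)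
  have hs : (0:ℝ) ≤ t ^ (1/q) / eNorm q A := by positivity
  rw [← eNorm_rpow hq, eNorm_smul hq, Complex.norm_real, Real.norm_eq_abs,
    abs_of_nonneg hs, div_mul_cancel₀ _ h0, ← Real.rpow_mul ht.le,
    one_div_mul_cancel hq.ne', Real.rpow_one]

lemma sum_combined_row (q : ℝ) {n r₁ r₂ : ℕ} (α₁ : Matrix (Fin n) (Fin r₁) ℂ)
    (α₂ : Matrix (Fin n) (Fin r₂) ℂ) :
    ∑ i, ∑ k, ‖(Matrix.of fun i k => Sum.elim (α₁ i) (α₂ i) (finSumFinEquiv.symm k)) i k‖ ^ q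
      = (∑ i, ∑ k₁, ‖α₁ i k₁‖ ^ q) + ∑ i, ∑ k₂, ‖α₂ i k₂‖ ^ q := by
  have h : ∀ i, ∑ k, ‖(Matrix.of fun i k =>
      Sum.elim (α₁ i) (α₂ i) (finSumFinEquiv.symm k)) i k‖ ^ q
      = (∑ k₁, ‖α₁ i k₁‖ ^ q) + ∑ k₂, ‖α₂ i k₂‖ ^ q := fun i => by
    rw [finSum_split (fun k => ‖(Matrix.of fun i k =>
      Sum.elim (α₁ i) (α₂ i) (finSumFinEquiv.symm k)) i k‖ ^ q)]
    simp [Equiv.symm_apply_apply]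
  simp only [h, Finset.sum_add_distrib]

lemma sum_combined_col (q : ℝ) {n r₁ r₂ : ℕ} (β₁ : Matrix (Fin r₁) (Fin n) ℂ)
    (β₂ : Matrix (Fin r₂) (Fin n) ℂ) :
    ∑ k, ∑ j, ‖(Matrix.of fun k j =>
        Sum.elim (fun l => β₁ l j) (fun l => β₂ l j) (finSumFinEquiv.symm k)) k j‖ ^ q
      = (∑ k₁, ∑ j, ‖β₁ k₁ j‖ ^ q) + ∑ k₂, ∑ j, ‖β₂ k₂ j‖ ^ q := by
  rw [finSum_split (fun k => ∑ j, ‖(Matrix.of fun k j =>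
      Sum.elim (fun l => β₁ l j) (fun l => β₂ l j) (finSumFinEquiv.symm k)) k j‖ ^ q)]
  simp [Equiv.symm_apply_apply]

/-- The quantity `‖v‖_{1,n}` on `M_n(V)`: the infimum of `‖α‖_{p'} ‖w‖ ‖β‖_p` over all
factorizations `v = α w β`. -/
noncomputable def norm1 {p : ℝ} (p' : ℝ) (S : POpSpace p V) (n : ℕ)
    (v : Matrix (Fin n) (Fin n) V) : ℝ :=
  sInf {c | ∃ (r : ℕ) (α : Matrix (Fin n) (Fin r) ℂ) (w : Matrix (Fin r) (Fin r) V)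
      (β : Matrix (Fin r) (Fin n) ℂ),
      v = act α w β ∧ c = eNorm p' α * S.N r w * eNorm p β}

/-- `‖·‖_{1,n}` satisfies the triangle inequality. -/
theorem norm1_triangle (p p' : ℝ) (hp : 1 < p) (hp' : 1 < p')
    (hconj : 1 / p + 1 / p' = 1) (S : POpSpace p V) (n : ℕ)
    (v₁ v₂ : Matrix (Fin n) (Fin n) V) :
    norm1 p' S n (v₁ + v₂) ≤ norm1 p' S n v₁ + norm1 p' S n v₂ := by
  have hp0 : (0:ℝ) < p := lt_trans one_pos hp
  have hp'0 : (0:ℝ) < p' := lt_trans one_pos hp'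
  unfold norm1
  set Sv : Matrix (Fin n) (Fin n) V → Set ℝ := fun v =>
    {c | ∃ (r : ℕ) (α : Matrix (Fin n) (Fin r) ℂ) (w : Matrix (Fin r) (Fin r) V)
      (β : Matrix (Fin r) (Fin n) ℂ),
      v = act α w β ∧ c = eNorm p' α * S.N r w * eNorm p β} with hSv
  have hne : ∀ v : Matrix (Fin n) (Fin n) V, (Sv v).Nonempty := fun v =>
    ⟨_, ⟨n, 1, v, 1, (act_one v).symm, rfl⟩⟩
  have hbdd : ∀ v : Matrix (Fin n) (Fin n) V, BddBelow (Sv v) := fun v => by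
    refine ⟨0, fun c hc => ?_⟩
    obtain ⟨r, α, w, β, -, rfl⟩ := hc
    have h1 := eNorm_nonneg p' α
    have h2 := eNorm_nonneg p β
    have h3 := S.nonneg r w
    positivity
  have key : ∀ t₁ ∈ Sv v₁, ∀ t₂ ∈ Sv v₂, sInf (Sv (v₁ + v₂)) ≤ t₁ + t₂ := by
    rintro t₁ ⟨r₁, α₁, w₁, β₁, hv₁, rfl⟩ t₂ ⟨r₂, α₂, w₂, β₂, hv₂, rfl⟩
    have hzero : ∀ (r : ℕ) (α : Matrix (Fin n) (Fin r) ℂ) (w : Matrix (Fin r) (Fin r) V)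
        (β : Matrix (Fin r) (Fin n) ℂ), eNorm p' α * S.N r w * eNorm p β = 0 →
        act α w β = 0 := by
      intro r α w β h
      rcases mul_eq_zero.1 h with h | h
      · rcases mul_eq_zero.1 h with h | h
        · rw [eNorm_eq_zero hp'0 h, act_zero_left]
        · rw [(S.eq_zero_iff _ _).1 h, act_zero_mid]
      · rw [eNorm_eq_zero hp0 h, act_zero_right]
    by_cases h₁ : eNorm p' α₁ * S.N r₁ w₁ * eNorm p β₁ = 0
    · have hv0 : v₁ = 0 := by rw [hv₁]; exact hzero _ _ _ _ h₁
      have hle : sInf (Sv (v₁ + v₂)) ≤ eNorm p' α₂ * S.N r₂ w₂ * eNorm p β₂ :=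
        csInf_le (hbdd _) ⟨r₂, α₂, w₂, β₂, by rw [hv0, zero_add, hv₂], rfl⟩
      linarith
    by_cases h₂ : eNorm p' α₂ * S.N r₂ w₂ * eNorm p β₂ = 0
    · have hv0 : v₂ = 0 := by rw [hv₂]; exact hzero _ _ _ _ h₂
      have hle : sInf (Sv (v₁ + v₂)) ≤ eNorm p' α₁ * S.N r₁ w₁ * eNorm p β₁ :=
        csInf_le (hbdd _) ⟨r₁, α₁, w₁, β₁, by rw [hv0, add_zero, hv₁], rfl⟩
      linarith
    -- main case
    obtain ⟨h₁ab, h₁c⟩ := mul_ne_zero_iff.1 h₁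
    obtain ⟨h₁a, h₁b⟩ := mul_ne_zero_iff.1 h₁ab
    obtain ⟨h₂ab, h₂c⟩ := mul_ne_zero_iff.1 h₂
    obtain ⟨h₂a, h₂b⟩ := mul_ne_zero_iff.1 h₂ab
    have ha₁ : 0 < eNorm p' α₁ := lt_of_le_of_ne (eNorm_nonneg _ _) (Ne.symm h₁a)
    have hb₁ : 0 < S.N r₁ w₁ := lt_of_le_of_ne (S.nonneg _ _) (Ne.symm h₁b)
    have hc₁ : 0 < eNorm p β₁ := lt_of_le_of_ne (eNorm_nonneg _ _) (Ne.symm h₁c)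
    have ha₂ : 0 < eNorm p' α₂ := lt_of_le_of_ne (eNorm_nonneg _ _) (Ne.symm h₂a)
    have hb₂ : 0 < S.N r₂ w₂ := lt_of_le_of_ne (S.nonneg _ _) (Ne.symm h₂b)
    have hc₂ : 0 < eNorm p β₂ := lt_of_le_of_ne (eNorm_nonneg _ _) (Ne.symm h₂c)
    set t₁ : ℝ := eNorm p' α₁ * S.N r₁ w₁ * eNorm p β₁ with ht₁def
    set t₂ : ℝ := eNorm p' α₂ * S.N r₂ w₂ * eNorm p β₂ with ht₂def
    have ht₁ : 0 < t₁ := by positivity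
    have ht₂ : 0 < t₂ := by positivity
    -- scaled matrices
    set α₁' := (((t₁ ^ (1/p') / eNorm p' α₁ : ℝ)) : ℂ) • α₁ with hα₁'
    set α₂' := (((t₂ ^ (1/p') / eNorm p' α₂ : ℝ)) : ℂ) • α₂ with hα₂'
    set w₁' := (((1 / S.N r₁ w₁ : ℝ)) : ℂ) • w₁ with hw₁'
    set w₂' := (((1 / S.N r₂ w₂ : ℝ)) : ℂ) • w₂ with hw₂'
    set β₁' := (((t₁ ^ (1/p) / eNorm p β₁ : ℝ)) : ℂ) • β₁ with hβ₁'
    set β₂' := (((t₂ ^ (1/p) / eNorm p β₂ : ℝ)) : ℂ) • β₂ with hβ₂'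
    have hpow : ∀ t : ℝ, 0 < t → t ^ (1/p') * t ^ (1/p) = t := fun t ht => by
      rw [← Real.rpow_add ht, show 1/p' + 1/p = 1 by linarith, Real.rpow_one]
    have hact : ∀ (r : ℕ) (α : Matrix (Fin n) (Fin r) ℂ) (w : Matrix (Fin r) (Fin r) V)
        (β : Matrix (Fin r) (Fin n) ℂ) (t : ℝ), 0 < t →
        eNorm p' α ≠ 0 → S.N r w ≠ 0 → eNorm p β ≠ 0 →
        t = eNorm p' α * S.N r w * eNorm p β →
        act ((((t ^ (1/p') / eNorm p' α : ℝ)) : ℂ) • α) ((((1 / S.N r w : ℝ)) : ℂ) • w)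
          ((((t ^ (1/p) / eNorm p β : ℝ)) : ℂ) • β) = act α w β := by
      intro r α w β t ht hα hw hβ hteq
      rw [act_smul₃]
      have hone : (t ^ (1/p') / eNorm p' α) * (1 / S.N r w) * (t ^ (1/p) / eNorm p β)
          = (1:ℝ) := by
        rw [div_mul_div_comm, div_mul_div_comm, mul_one, hpow t ht, ← hteq,
          div_self ht.ne']
      rw [show ((((t ^ (1/p') / eNorm p' α : ℝ)) : ℂ) * (((1 / S.N r w : ℝ)) : ℂ) *
          (((t ^ (1/p) / eNorm p β : ℝ)) : ℂ)) = 1 by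
        rw [← Complex.ofReal_mul, ← Complex.ofReal_mul, hone, Complex.ofReal_one], one_smul]
    have hact₁ : act α₁' w₁' β₁' = v₁ := by
      rw [hα₁', hw₁', hβ₁', hact r₁ α₁ w₁ β₁ t₁ ht₁ h₁a h₁b h₁c ht₁def, hv₁]
    have hact₂ : act α₂' w₂' β₂' = v₂ := by
      rw [hα₂', hw₂', hβ₂', hact r₂ α₂ w₂ β₂ t₂ ht₂ h₂a h₂b h₂c ht₂def, hv₂]
    -- sums
    have hsumα₁ : ∑ i, ∑ k, ‖α₁' i k‖ ^ p' = t₁ := scaled_sum hp'0 h₁a ht₁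
    have hsumα₂ : ∑ i, ∑ k, ‖α₂' i k‖ ^ p' = t₂ := scaled_sum hp'0 h₂a ht₂
    have hsumβ₁ : ∑ k, ∑ j, ‖β₁' k j‖ ^ p = t₁ := scaled_sum hp0 h₁c ht₁
    have hsumβ₂ : ∑ k, ∑ j, ‖β₂' k j‖ ^ p = t₂ := scaled_sum hp0 h₂c ht₂
    -- combined matrices
    set αc := Matrix.of fun i k => Sum.elim (α₁' i) (α₂' i) (finSumFinEquiv.symm k) with hαc
    set βc := Matrix.of fun k j =>
      Sum.elim (fun l => β₁' l j) (fun l => β₂' l j) (finSumFinEquiv.symm k) with hβc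
    have hactc : v₁ + v₂ = act αc (blockDiag w₁' w₂') βc := by
      rw [hαc, hβc, act_block, hact₁, hact₂]
    have hNw : S.N (r₁ + r₂) (blockDiag w₁' w₂') = 1 := by
      rw [S.Dinf]
      have e₁ : S.N r₁ w₁' = 1 := by
        rw [hw₁', S.smul_eq, Complex.norm_real, Real.norm_eq_abs,
          abs_of_nonneg (by positivity), one_div_mul_cancel h₁b]
      have e₂ : S.N r₂ w₂' = 1 := by
        rw [hw₂', S.smul_eq, Complex.norm_real, Real.norm_eq_abs,
          abs_of_nonneg (by positivity), one_div_mul_cancel h₂b]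
      rw [e₁, e₂, max_self]
    have heα : eNorm p' αc = (t₁ + t₂) ^ (1/p') := by
      unfold eNorm
      rw [hαc, sum_combined_row, hsumα₁, hsumα₂]
    have heβ : eNorm p βc = (t₁ + t₂) ^ (1/p) := by
      unfold eNorm
      rw [hβc, sum_combined_col, hsumβ₁, hsumβ₂]
    refine csInf_le (hbdd _) ⟨r₁ + r₂, αc, blockDiag w₁' w₂', βc, hactc, ?_⟩
    rw [heα, heβ, hNw, mul_one, ← Real.rpow_add (by positivity),
      show 1/p' + 1/p = 1 by linarith, Real.rpow_one]
  have h1 : ∀ t₁ ∈ Sv v₁, sInf (Sv (v₁ + v₂)) - t₁ ≤ sInf (Sv v₂) := fun t₁ ht₁ =>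
    le_csInf (hne v₂) fun t₂ ht₂ => by linarith [key t₁ ht₁ t₂ ht₂]
  have h2 : sInf (Sv (v₁ + v₂)) - sInf (Sv v₂) ≤ sInf (Sv v₁) :=
    le_csInf (hne v₁) fun t₁ ht₁ => by linarith [h1 t₁ ht₁]
  linarith
end
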